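/- arXiv:2511.05801 — 2 statements merged into one kernel-verified Lean document; each statement's English description precedes it below -/
import Mathlib

section
/- Let C ≥ 1 clusters have sizes N_1,…,N_C ≥ 1 with average N̄ = (1/C)Σ N_c and ω = max_c N_c/N̄, total N = Σ N_c. Let Y_{ci} (1 ≤ i ≤ N_c) be real numbers and Ỹ_c = Σ_i Y_{ci}/N̄. Then (1/C)·max_c Ỹ_c⁴ ≤ ω³ · (1/N)·Σ_c Σ_i Y_{ci}⁴. -/
open Finset

theorem max_scaled_cluster_total_bound (C : ℕ) (hC : 1 ≤ C)
    (Nc : Fin C → ℕ) (hNc : ∀ c, 1 ≤ Nc c)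
    (Y : (c : Fin C) → Fin (Nc c) → ℝ) :
    ((1 : ℝ) / (C : ℝ)) *
        (Finset.univ.sup' (Finset.univ_nonempty_iff.mpr ⟨⟨0, hC⟩⟩)
          (fun c => ((∑ i, Y c i) / ((∑ c', (Nc c' : ℝ)) / (C : ℝ))) ^ 4))
    ≤ (Finset.univ.sup' (Finset.univ_nonempty_iff.mpr ⟨⟨0, hC⟩⟩)
        (fun c => (Nc c : ℝ) / ((∑ c', (Nc c' : ℝ)) / (C : ℝ)))) ^ 3 *
      (((1 : ℝ) / (∑ c', (Nc c' : ℝ))) * ∑ c, ∑ i, (Y c i) ^ 4) := by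
  have hne : (Finset.univ : Finset (Fin C)).Nonempty :=
    Finset.univ_nonempty_iff.mpr ⟨⟨0, hC⟩⟩
  have hCpos : (0:ℝ) < C := by exact_mod_cast hC
  set N : ℝ := ∑ c', (Nc c' : ℝ) with hNdef
  have hNpos : 0 < N := by
    apply Finset.sum_pos (fun c _ => by exact_mod_cast hNc c) hne
  set Nbar : ℝ := N / C with hNbar
  have hNbpos : 0 < Nbar := div_pos hNpos hCpos
  set ω : ℝ := Finset.univ.sup' hne (fun c => (Nc c : ℝ) / Nbar) with hω
  set T : ℝ := ∑ c, ∑ i, (Y c i) ^ 4 with hT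
  have hTc : ∀ c : Fin C, ∑ i, (Y c i) ^ 4 ≤ T := by
    intro c
    exact Finset.single_le_sum (f := fun c => ∑ i, (Y c i) ^ 4)
      (fun c' _ => Finset.sum_nonneg (fun i _ => by positivity))
      (Finset.mem_univ c)
  have key : ∀ c : Fin C, ((∑ i, Y c i) / Nbar) ^ 4 ≤ ω ^ 3 * (C / N) * T := by
    intro c
    have h1 : ((∑ i, Y c i)) ^ 4 ≤ (∑ i, |Y c i|) ^ 4 := by
      calc ((∑ i, Y c i)) ^ 4 = |∑ i, Y c i| ^ 4 := by
              rw [← abs_pow, abs_of_nonneg (by positivity)]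
        _ ≤ (∑ i, |Y c i|) ^ 4 := by
              exact pow_le_pow_left₀ (abs_nonneg _) (Finset.abs_sum_le_sum_abs _ _) 4
    have h2 : (∑ i, |Y c i|) ^ 4 / (Nc c : ℝ) ^ 3 ≤ ∑ i, |Y c i| ^ 4 := by
      have := pow_sum_div_card_le_sum_pow (s := (Finset.univ : Finset (Fin (Nc c))))
        (f := fun i => |Y c i|) (fun i _ => abs_nonneg _) 3
      simpa using this
    have hNcpos : (0:ℝ) < (Nc c : ℝ) := by exact_mod_cast hNc c
    have h3 : (∑ i, Y c i) ^ 4 ≤ (Nc c : ℝ) ^ 3 * ∑ i, (Y c i) ^ 4 := by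
      have habs : ∑ i, |Y c i| ^ 4 = ∑ i, (Y c i) ^ 4 := by
        apply Finset.sum_congr rfl; intro i _
        rw [← abs_pow, abs_of_nonneg (by positivity)]
      have := (div_le_iff₀ (by positivity)).mp h2
      calc (∑ i, Y c i) ^ 4 ≤ (∑ i, |Y c i|) ^ 4 := h1
        _ ≤ (∑ i, |Y c i| ^ 4) * (Nc c : ℝ) ^ 3 := this
        _ = (Nc c : ℝ) ^ 3 * ∑ i, (Y c i) ^ 4 := by rw [habs]; ring
    have hNcω : (Nc c : ℝ) ≤ ω * Nbar := by
      have : (Nc c : ℝ) / Nbar ≤ ω :=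
        Finset.le_sup' (fun c => (Nc c : ℝ) / Nbar) (Finset.mem_univ c)
      exact (div_le_iff₀ hNbpos).mp this
    have hωpos : 0 < ω :=
      lt_of_lt_of_le (div_pos hNcpos hNbpos)
        (Finset.le_sup' (fun c => (Nc c : ℝ) / Nbar) (Finset.mem_univ c))
    have h4 : (Nc c : ℝ) ^ 3 ≤ ω ^ 3 * Nbar ^ 3 := by
      calc (Nc c : ℝ) ^ 3 ≤ (ω * Nbar) ^ 3 := pow_le_pow_left₀ hNcpos.le hNcω 3
        _ = ω ^ 3 * Nbar ^ 3 := by ring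
    have h5 : (∑ i, Y c i) ^ 4 ≤ ω ^ 3 * Nbar ^ 3 * T := by
      calc (∑ i, Y c i) ^ 4 ≤ (Nc c : ℝ) ^ 3 * ∑ i, (Y c i) ^ 4 := h3
        _ ≤ (ω ^ 3 * Nbar ^ 3) * T := by
            apply mul_le_mul h4 (hTc c)
              (Finset.sum_nonneg (fun i _ => by positivity))
              (by positivity)
    have hCNbar : C / N = 1 / Nbar := by
      rw [hNbar]; field_simp
    rw [div_pow, div_le_iff₀ (by positivity : (0:ℝ) < Nbar ^ 4)]
    calc (∑ i, Y c i) ^ 4 ≤ ω ^ 3 * Nbar ^ 3 * T := h5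
      _ = ω ^ 3 * (C / N) * T * Nbar ^ 4 := by
          rw [hCNbar]; field_simp
  have hsup : (Finset.univ.sup' hne
      (fun c => ((∑ i, Y c i) / Nbar) ^ 4)) ≤ ω ^ 3 * (C / N) * T :=
    Finset.sup'_le _ _ (fun c _ => key c)
  calc ((1:ℝ)/C) * (Finset.univ.sup' hne (fun c => ((∑ i, Y c i) / Nbar) ^ 4))
      ≤ ((1:ℝ)/C) * (ω ^ 3 * (C / N) * T) := by
        apply mul_le_mul_of_nonneg_left hsup (by positivity)
    _ = ω ^ 3 * (1 / N * T) := by field_simp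
end

section
/- Let C ≥ 2, 1 ≤ S ≤ C, 1 ≤ S₁ ≤ S−1, p = S/C, q = S₁/S. Under simple random sampling of S clusters followed by random assignment of S₁ of them to treatment (all without replacement), the variance of τ̄ = (1/C)Σ_c [R_cD_c x_c/(pq) − R_c(1−D_c) z_c/(p(1−q))] equals (1/C)·[ σ²(x)/(pq) + σ²(z)/(p(1−q)) − σ²(d) ], where σ²(x) = (1/(C−1))Σ_c(x_c − x̄)², σ²(z) = (1/(C−1))Σ_c(z_c − z̄)², and σ²(d) = (1/(C−1))Σ_c((x_c − z_c) − (x̄ − z̄))². -/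
open Finset

/-- Two-stage design sample space: pairs `(A, B)` where `A` is the size-`S` set of
sampled clusters and `B ⊆ A` is the size-`S₁` set of treated clusters. -/
def twoStage (C S S₁ : ℕ) : Finset (Finset (Fin C) × Finset (Fin C)) :=
  (((Finset.univ : Finset (Fin C)).powersetCard S) ×ˢ
      ((Finset.univ : Finset (Fin C)).powersetCard S₁)).filter (fun pr => pr.2 ⊆ pr.1)

/-- The Horvitz–Thompson ATE estimator for realization `(A, B)`. -/
noncomputable def tauBar (C S S₁ : ℕ) (x z : Fin C → ℝ)
    (pr : Finset (Fin C) × Finset (Fin C)) : ℝ :=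
  (1 / (C : ℝ)) * ∑ c,
    ((if c ∈ pr.2 then (1 : ℝ) else 0) * x c / ((S : ℝ) / C * ((S₁ : ℝ) / S))
      - (if c ∈ pr.1 ∧ c ∉ pr.2 then (1 : ℝ) else 0) * z c /
          ((S : ℝ) / C * (1 - (S₁ : ℝ) / S)))


lemma count_gen {α : Type*} [DecidableEq α] (s T₁ T₀ : Finset α) (h1 : T₁ ⊆ s)
    (hd : Disjoint T₁ T₀) (n : ℕ) (hn : T₁.card ≤ n) :
    ((s.powersetCard n).filter (fun B => T₁ ⊆ B ∧ Disjoint T₀ B)).card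
      = ((s \ T₁) \ T₀).card.choose (n - T₁.card) := by
  rw [← Finset.card_powersetCard]
  apply Finset.card_bij' (fun B _ => B \ T₁) (fun B' _ => B' ∪ T₁)
  · intro B hB
    simp only [mem_filter, mem_powersetCard] at hB ⊢
    obtain ⟨⟨hBs, hBc⟩, hT1B, hT0B⟩ := hB
    constructor
    · intro a ha
      simp only [mem_sdiff] at ha ⊢
      exact ⟨⟨hBs ha.1, ha.2⟩, fun h => (Finset.disjoint_left.mp hT0B h ha.1)⟩
    · rw [Finset.card_sdiff_of_subset hT1B, hBc]
  · intro B' hB'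
    simp only [mem_powersetCard, mem_filter] at hB' ⊢
    obtain ⟨hB's, hB'c⟩ := hB'
    have hdis : Disjoint B' T₁ := by
      refine Finset.disjoint_left.mpr fun a ha hb => ?_
      have := hB's ha; simp [mem_sdiff] at this; exact this.1.2 hb
    refine ⟨⟨Finset.union_subset (fun a ha => by have := hB's ha; simp [mem_sdiff] at this; exact this.1.1) h1, ?_⟩, Finset.subset_union_right, ?_⟩
    · rw [Finset.card_union_of_disjoint hdis, hB'c]
      omega
    · refine Finset.disjoint_left.mpr fun a ha => ?_
      simp only [mem_union]
      rintro (h | h)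
      · have := hB's h; simp [mem_sdiff] at this; exact this.2 ha
      · exact Finset.disjoint_left.mp hd h ha
  · intro B hB
    simp only [mem_filter] at hB
    exact Finset.sdiff_union_of_subset hB.2.1
  · intro B' hB'
    simp only [mem_powersetCard] at hB'
    refine Finset.union_sdiff_cancel_right ?_
    refine Finset.disjoint_left.mpr fun a ha hb => ?_
    have := hB'.1 ha; simp [mem_sdiff] at this; exact this.1.2 hb

lemma cg_one {α : Type*} [DecidableEq α] (s : Finset α) (c : α) (hc : c ∈ s) (n : ℕ)
    (hn : 1 ≤ n) :
    ((s.powersetCard n).filter (fun B => c ∈ B)).card = (s.card - 1).choose (n - 1) := by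
  have := count_gen s {c} ∅ (by simpa) (by simp) n (by simpa)
  simp only [Finset.singleton_subset_iff, Finset.disjoint_empty_left, and_true,
    Finset.sdiff_empty, Finset.card_singleton] at this
  rw [this, Finset.card_sdiff_of_subset (by simpa), Finset.card_singleton]

lemma cg_not {α : Type*} [DecidableEq α] (s : Finset α) (c : α) (hc : c ∈ s) (n : ℕ) :
    ((s.powersetCard n).filter (fun B => c ∉ B)).card = (s.card - 1).choose n := by
  have := count_gen s ∅ {c} (by simp) (by simp) n (by simp)
  simp only [Finset.empty_subset, Finset.disjoint_singleton_left, true_and,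
    Finset.sdiff_empty, Finset.card_empty, Nat.sub_zero] at this
  rw [this, Finset.card_sdiff_of_subset (by simpa), Finset.card_singleton]

lemma cg_two {α : Type*} [DecidableEq α] (s : Finset α) (c c' : α) (hc : c ∈ s) (hc' : c' ∈ s)
    (hne : c ≠ c') (n : ℕ) (hn : 2 ≤ n) :
    ((s.powersetCard n).filter (fun B => c ∈ B ∧ c' ∈ B)).card
      = (s.card - 2).choose (n - 2) := by
  have := count_gen s {c, c'} ∅ (by simp [Finset.insert_subset_iff, hc, hc']) (Finset.disjoint_empty_right _) n
    (by rw [Finset.card_pair hne]; exact hn)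
  rw [Finset.card_pair hne] at this
  simp only [Finset.insert_subset_iff, Finset.singleton_subset_iff,
    Finset.disjoint_empty_left, and_true, Finset.sdiff_empty] at this
  rw [this, Finset.card_sdiff_of_subset (by simp [Finset.insert_subset_iff, hc, hc']), Finset.card_pair hne]

lemma cg_two_small {α : Type*} [DecidableEq α] (s : Finset α) (c c' : α)
    (hne : c ≠ c') (n : ℕ) (hn : n < 2) :
    ((s.powersetCard n).filter (fun B => c ∈ B ∧ c' ∈ B)).card = 0 := by
  rw [Finset.card_eq_zero]
  refine Finset.filter_eq_empty_iff.mpr fun B hB => ?_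
  rw [mem_powersetCard] at hB
  rintro ⟨h1, h2⟩
  have : ({c, c'} : Finset α) ⊆ B := by simp [Finset.insert_subset_iff, h1, h2]
  have := Finset.card_le_card this
  rw [Finset.card_pair hne] at this
  omega

lemma cg_mixed {α : Type*} [DecidableEq α] (s : Finset α) (c c' : α) (hc : c ∈ s) (hc' : c' ∈ s)
    (hne : c ≠ c') (n : ℕ) (hn : 1 ≤ n) :
    ((s.powersetCard n).filter (fun B => c ∈ B ∧ c' ∉ B)).card
      = (s.card - 2).choose (n - 1) := by
  have := count_gen s {c} {c'} (by simpa) (Finset.disjoint_singleton.mpr hne) n (by simpa)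
  simp only [Finset.singleton_subset_iff, Finset.disjoint_singleton_left,
    Finset.card_singleton] at this
  rw [this, Finset.card_sdiff_of_subset (by simp [mem_sdiff, hc']; exact Ne.symm hne),
    Finset.card_sdiff_of_subset (by simpa), Finset.card_singleton, Finset.card_singleton, Nat.sub_sub]

lemma cg_none {α : Type*} [DecidableEq α] (s : Finset α) (c c' : α) (hc : c ∈ s) (hc' : c' ∈ s)
    (hne : c ≠ c') (n : ℕ) :
    ((s.powersetCard n).filter (fun B => c ∉ B ∧ c' ∉ B)).card
      = (s.card - 2).choose n := by
  have := count_gen s ∅ {c, c'} (by simp) (by simp) n (by simp)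
  simp only [Finset.empty_subset, true_and, Finset.sdiff_empty, Finset.card_empty,
    Nat.sub_zero] at this
  have h2 : ∀ B : Finset α, (Disjoint {c, c'} B) ↔ (c ∉ B ∧ c' ∉ B) := by
    intro B; rw [Finset.disjoint_left]; simp [Finset.mem_insert]
  simp only [h2] at this
  rw [this, Finset.card_sdiff_of_subset (by simp [Finset.insert_subset_iff, hc, hc']),
    Finset.card_pair hne]

lemma I1 (n k : ℕ) (hn : 1 ≤ n) (hk : 1 ≤ k) :
    n * (n-1).choose (k-1) = n.choose k * k := by
  obtain ⟨n', rfl⟩ : ∃ n', n = n' + 1 := ⟨n - 1, by omega⟩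
  obtain ⟨k', rfl⟩ : ∃ k', k = k' + 1 := ⟨k - 1, by omega⟩
  simpa using Nat.add_one_mul_choose_eq n' k'

lemma I2 (n k : ℕ) (hn : 1 ≤ n) :
    (n-1).choose k * n = n.choose k * (n - k) := by
  obtain ⟨n', rfl⟩ : ∃ n', n = n' + 1 := ⟨n - 1, by omega⟩
  simpa using Nat.choose_mul_succ_eq n' k

-- r1 : C * n1 = N * S₁
lemma nat_r1 (C S S₁ : ℕ) (hC : 1 ≤ C) (hS : 1 ≤ S) (hS₁ : 1 ≤ S₁) :
    C * ((C-1).choose (S-1) * (S-1).choose (S₁-1)) = (C.choose S * S.choose S₁) * S₁ := by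
  calc C * ((C-1).choose (S-1) * (S-1).choose (S₁-1))
      = (C * (C-1).choose (S-1)) * (S-1).choose (S₁-1) := by ring
    _ = (C.choose S * S) * (S-1).choose (S₁-1) := by rw [I1 C S hC hS]
    _ = C.choose S * (S * (S-1).choose (S₁-1)) := by ring
    _ = C.choose S * (S.choose S₁ * S₁) := by rw [I1 S S₁ hS hS₁]
    _ = (C.choose S * S.choose S₁) * S₁ := by ring

lemma nat_r0 (C S S₁ : ℕ) (hC : 1 ≤ C) (hS : 1 ≤ S) :
    C * ((C-1).choose (S-1) * (S-1).choose S₁) = (C.choose S * S.choose S₁) * (S - S₁) := by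
  calc C * ((C-1).choose (S-1) * (S-1).choose S₁)
      = (C * (C-1).choose (S-1)) * (S-1).choose S₁ := by ring
    _ = (C.choose S * S) * (S-1).choose S₁ := by rw [I1 C S hC hS]
    _ = C.choose S * ((S-1).choose S₁ * S) := by ring
    _ = C.choose S * (S.choose S₁ * (S - S₁)) := by rw [I2 S S₁ hS]
    _ = (C.choose S * S.choose S₁) * (S - S₁) := by ring

lemma nat_r11 (C S S₁ : ℕ) (hC : 2 ≤ C) (hS : 2 ≤ S) (hS₁ : 2 ≤ S₁) :
    C * (C-1) * ((C-2).choose (S-2) * (S-2).choose (S₁-2))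
      = (C.choose S * S.choose S₁) * (S₁ * (S₁-1)) := by
  have h3 : (C-1) * ((C-1)-1).choose ((S-1)-1) = (C-1).choose (S-1) * (S-1) :=
    I1 (C-1) (S-1) (by omega) (by omega)
  have h4 : (S-1) * ((S-1)-1).choose ((S₁-1)-1) = (S-1).choose (S₁-1) * (S₁-1) :=
    I1 (S-1) (S₁-1) (by omega) (by omega)
  have e1 : C - 1 - 1 = C - 2 := by omega
  have e2 : S - 1 - 1 = S - 2 := by omega
  have e3 : S₁ - 1 - 1 = S₁ - 2 := by omega
  rw [e1, e2] at h3; rw [e2, e3] at h4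
  calc C * (C-1) * ((C-2).choose (S-2) * (S-2).choose (S₁-2))
      = C * (((C-1) * (C-2).choose (S-2)) * (S-2).choose (S₁-2)) := by ring
    _ = C * (((C-1).choose (S-1) * (S-1)) * (S-2).choose (S₁-2)) := by rw [h3]
    _ = C * ((C-1).choose (S-1) * ((S-1) * (S-2).choose (S₁-2))) := by ring
    _ = C * ((C-1).choose (S-1) * ((S-1).choose (S₁-1) * (S₁-1))) := by rw [h4]
    _ = (C * ((C-1).choose (S-1) * (S-1).choose (S₁-1))) * (S₁-1) := by ring
    _ = ((C.choose S * S.choose S₁) * S₁) * (S₁-1) := by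
        rw [nat_r1 C S S₁ (by omega) (by omega) (by omega)]
    _ = (C.choose S * S.choose S₁) * (S₁ * (S₁-1)) := by ring

lemma nat_r10 (C S S₁ : ℕ) (hC : 2 ≤ C) (hS : 2 ≤ S) (hS₁ : 1 ≤ S₁) :
    C * (C-1) * ((C-2).choose (S-2) * (S-2).choose (S₁-1))
      = (C.choose S * S.choose S₁) * (S₁ * (S - S₁)) := by
  have h3 : (C-1) * ((C-1)-1).choose ((S-1)-1) = (C-1).choose (S-1) * (S-1) :=
    I1 (C-1) (S-1) (by omega) (by omega)
  have h6 : (S-1) * ((S-1)-1).choose (S₁-1) = (S-1).choose S₁ * S₁ :=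
    I1 (S-1) S₁ (by omega) hS₁
  have e1 : C - 1 - 1 = C - 2 := by omega
  have e2 : S - 1 - 1 = S - 2 := by omega
  rw [e1, e2] at h3; rw [e2] at h6
  calc C * (C-1) * ((C-2).choose (S-2) * (S-2).choose (S₁-1))
      = C * (((C-1) * (C-2).choose (S-2)) * (S-2).choose (S₁-1)) := by ring
    _ = C * (((C-1).choose (S-1) * (S-1)) * (S-2).choose (S₁-1)) := by rw [h3]
    _ = C * ((C-1).choose (S-1) * ((S-1) * (S-2).choose (S₁-1))) := by ring
    _ = C * ((C-1).choose (S-1) * ((S-1).choose S₁ * S₁)) := by rw [h6]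
    _ = (C * ((C-1).choose (S-1) * (S-1).choose S₁)) * S₁ := by ring
    _ = ((C.choose S * S.choose S₁) * (S - S₁)) * S₁ := by
        rw [nat_r0 C S S₁ (by omega) (by omega)]
    _ = (C.choose S * S.choose S₁) * (S₁ * (S - S₁)) := by ring

lemma nat_r00 (C S S₁ : ℕ) (hC : 2 ≤ C) (hS : 2 ≤ S) :
    C * (C-1) * ((C-2).choose (S-2) * (S-2).choose S₁)
      = (C.choose S * S.choose S₁) * ((S - S₁) * (S - S₁ - 1)) := by
  have h3 : (C-1) * ((C-1)-1).choose ((S-1)-1) = (C-1).choose (S-1) * (S-1) :=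
    I1 (C-1) (S-1) (by omega) (by omega)
  have h7 : ((S-1)-1).choose S₁ * (S-1) = (S-1).choose S₁ * ((S-1) - S₁) :=
    I2 (S-1) S₁ (by omega)
  have e1 : C - 1 - 1 = C - 2 := by omega
  have e2 : S - 1 - 1 = S - 2 := by omega
  have e3 : S - 1 - S₁ = S - S₁ - 1 := by omega
  rw [e1, e2] at h3; rw [e2, e3] at h7
  calc C * (C-1) * ((C-2).choose (S-2) * (S-2).choose S₁)
      = C * (((C-1) * (C-2).choose (S-2)) * (S-2).choose S₁) := by ring
    _ = C * (((C-1).choose (S-1) * (S-1)) * (S-2).choose S₁) := by rw [h3]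
    _ = C * ((C-1).choose (S-1) * ((S-2).choose S₁ * (S-1))) := by ring
    _ = C * ((C-1).choose (S-1) * ((S-1).choose S₁ * (S - S₁ - 1))) := by rw [h7]
    _ = (C * ((C-1).choose (S-1) * (S-1).choose S₁)) * (S - S₁ - 1) := by ring
    _ = ((C.choose S * S.choose S₁) * (S - S₁)) * (S - S₁ - 1) := by
        rw [nat_r0 C S S₁ (by omega) (by omega)]
    _ = (C.choose S * S.choose S₁) * ((S - S₁) * (S - S₁ - 1)) := by ring
lemma sum_erase_eq {C : ℕ} (f : Fin C → ℝ) (c : Fin C) :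
    ∑ c' ∈ univ.erase c, f c' = (∑ c', f c') - f c := by
  rw [← Finset.add_sum_erase univ f (mem_univ c)]; ring

lemma expand_sq {ι : Type*} (s : Finset ι) (f : ι → ℝ) (a : ℝ) :
    ∑ i ∈ s, (f i - a)^2
      = ∑ i ∈ s, f i^2 - 2*a*(∑ i ∈ s, f i) + (s.card : ℝ)*a^2 := by
  have h : ∀ i ∈ s, (f i - a)^2 = f i^2 - 2*a*f i + a^2 := fun i _ => by ring
  rw [Finset.sum_congr rfl h, Finset.sum_add_distrib, Finset.sum_sub_distrib,
    ← Finset.mul_sum, Finset.sum_const, nsmul_eq_mul]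

lemma var_form {ι : Type*} (s : Finset ι) (f : ι → ℝ) (h : ((s.card : ℝ)) ≠ 0) :
    (∑ i ∈ s, (f i - (∑ j ∈ s, f j)/(s.card : ℝ))^2)/(s.card : ℝ)
      = (∑ i ∈ s, f i^2)/(s.card : ℝ) - ((∑ i ∈ s, f i)/(s.card : ℝ))^2 := by
  rw [expand_sq]
  field_simp
  ring



lemma twoStage_sum (C S S₁ : ℕ) (f : Finset (Fin C) × Finset (Fin C) → ℝ) :
    ∑ pr ∈ twoStage C S S₁, f pr
      = ∑ A ∈ (Finset.univ : Finset (Fin C)).powersetCard S,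
          ∑ B ∈ A.powersetCard S₁, f (A, B) := by
  rw [twoStage, Finset.sum_filter, Finset.sum_product]
  refine Finset.sum_congr rfl fun A hA => ?_
  rw [← Finset.sum_filter]
  congr 1
  ext B
  simp only [mem_filter, mem_powersetCard]
  constructor
  · rintro ⟨⟨-, hc⟩, hBA⟩; exact ⟨hBA, hc⟩
  · rintro ⟨hBA, hc⟩; exact ⟨⟨Finset.subset_univ _, hc⟩, hBA⟩

lemma ind_mul (P Q : Prop) [Decidable P] [Decidable Q] :
    (if P then (1:ℝ) else 0) * (if Q then 1 else 0) = if P ∧ Q then 1 else 0 := by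
  by_cases hP : P <;> by_cases hQ : Q <;> simp [hP, hQ]

lemma cardA {C S : ℕ} {A : Finset (Fin C)} (hA : A ∈ (univ : Finset (Fin C)).powersetCard S) :
    A.card = S := (mem_powersetCard.mp hA).2

-- total count
lemma twoStage_card (C S S₁ : ℕ) :
    ((twoStage C S S₁).card : ℝ) = (C.choose S * S.choose S₁ : ℕ) := by
  rw [Finset.card_eq_sum_ones, Nat.cast_sum]
  push_cast
  rw [twoStage_sum]
  have inner : ∀ A ∈ (univ : Finset (Fin C)).powersetCard S,
      ∑ _B ∈ A.powersetCard S₁, (1:ℝ) = ((S.choose S₁ : ℕ) : ℝ) := by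
    intro A hA
    rw [Finset.sum_const, nsmul_eq_mul, mul_one, Finset.card_powersetCard, cardA hA]
  rw [Finset.sum_congr rfl inner, Finset.sum_const, nsmul_eq_mul,
    Finset.card_powersetCard, card_univ, Fintype.card_fin]

lemma sum_ind_D (C S S₁ : ℕ) (hS : 1 ≤ S) (hS₁ : 1 ≤ S₁) (c : Fin C) :
    ∑ pr ∈ twoStage C S S₁, (if c ∈ pr.2 then (1:ℝ) else 0)
      = ((C-1).choose (S-1) * (S-1).choose (S₁-1) : ℕ) := by
  rw [twoStage_sum]
  have inner : ∀ A ∈ (univ : Finset (Fin C)).powersetCard S,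
      ∑ B ∈ A.powersetCard S₁, (if c ∈ B then (1:ℝ) else 0)
        = (if c ∈ A then (1:ℝ) else 0) * ((S-1).choose (S₁-1) : ℕ) := by
    intro A hA
    rw [Finset.sum_boole]
    by_cases hc : c ∈ A
    · rw [cg_one A c hc S₁ hS₁, cardA hA, if_pos hc, one_mul]
    · rw [if_neg hc, zero_mul]
      norm_cast
      rw [Finset.card_eq_zero]
      refine Finset.filter_eq_empty_iff.mpr fun B hB hcB => ?_
      exact hc ((mem_powersetCard.mp hB).1 hcB)
  rw [Finset.sum_congr rfl inner, ← Finset.sum_mul, Finset.sum_boole,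
    cg_one univ c (mem_univ c) S hS, card_univ, Fintype.card_fin]
  push_cast
  ring

lemma sum_ind_W (C S S₁ : ℕ) (hS : 1 ≤ S) (c : Fin C) :
    ∑ pr ∈ twoStage C S S₁, (if c ∈ pr.1 ∧ c ∉ pr.2 then (1:ℝ) else 0)
      = ((C-1).choose (S-1) * (S-1).choose S₁ : ℕ) := by
  rw [twoStage_sum]
  have inner : ∀ A ∈ (univ : Finset (Fin C)).powersetCard S,
      ∑ B ∈ A.powersetCard S₁, (if c ∈ A ∧ c ∉ B then (1:ℝ) else 0)
        = (if c ∈ A then (1:ℝ) else 0) * ((S-1).choose S₁ : ℕ) := by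
    intro A hA
    by_cases hc : c ∈ A
    · rw [if_pos hc, one_mul]
      have hp : ∀ B : Finset (Fin C), (c ∈ A ∧ c ∉ B) = (c ∉ B) := fun B => by simp [hc]
      simp only [hp]
      rw [Finset.sum_boole, cg_not A c hc S₁, cardA hA]
    · simp [hc]
  rw [Finset.sum_congr rfl inner, ← Finset.sum_mul, Finset.sum_boole,
    cg_one univ c (mem_univ c) S hS, card_univ, Fintype.card_fin]
  push_cast
  ring

lemma sum_ind_DD (C S S₁ : ℕ) (hC : 2 ≤ C) (hS : 2 ≤ S) (hS₁ : 2 ≤ S₁) (c c' : Fin C)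
    (hne : c ≠ c') :
    ∑ pr ∈ twoStage C S S₁,
        (if c ∈ pr.2 ∧ c' ∈ pr.2 then (1:ℝ) else 0)
      = ((C-2).choose (S-2) * (S-2).choose (S₁-2) : ℕ) := by
  rw [twoStage_sum]
  have inner : ∀ A ∈ (univ : Finset (Fin C)).powersetCard S,
      ∑ B ∈ A.powersetCard S₁, (if c ∈ B ∧ c' ∈ B then (1:ℝ) else 0)
        = (if c ∈ A ∧ c' ∈ A then (1:ℝ) else 0) * ((S-2).choose (S₁-2) : ℕ) := by
    intro A hA
    rw [Finset.sum_boole]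
    by_cases hc : c ∈ A ∧ c' ∈ A
    · rw [cg_two A c c' hc.1 hc.2 hne S₁ hS₁, cardA hA, if_pos hc, one_mul]
    · rw [if_neg hc, zero_mul]
      norm_cast
      rw [Finset.card_eq_zero]
      refine Finset.filter_eq_empty_iff.mpr fun B hB hcB => ?_
      have hBA := (mem_powersetCard.mp hB).1
      exact hc ⟨hBA hcB.1, hBA hcB.2⟩
  rw [Finset.sum_congr rfl inner, ← Finset.sum_mul, Finset.sum_boole,
    cg_two univ c c' (mem_univ c) (mem_univ c') hne S hS, card_univ, Fintype.card_fin]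
  push_cast
  ring

lemma sum_ind_DD_small (C S S₁ : ℕ) (hS₁ : S₁ < 2) (c c' : Fin C) (hne : c ≠ c') :
    ∑ pr ∈ twoStage C S S₁,
        (if c ∈ pr.2 ∧ c' ∈ pr.2 then (1:ℝ) else 0) = 0 := by
  rw [twoStage_sum]
  rw [Finset.sum_congr rfl (fun A hA => ?_), Finset.sum_const_zero]
  rw [Finset.sum_boole, cg_two_small A c c' hne S₁ hS₁, Nat.cast_zero]

lemma sum_ind_DW (C S S₁ : ℕ) (hC : 2 ≤ C) (hS : 2 ≤ S) (hS₁ : 1 ≤ S₁) (c c' : Fin C)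
    (hne : c ≠ c') :
    ∑ pr ∈ twoStage C S S₁,
        (if c ∈ pr.2 ∧ (c' ∈ pr.1 ∧ c' ∉ pr.2) then (1:ℝ) else 0)
      = ((C-2).choose (S-2) * (S-2).choose (S₁-1) : ℕ) := by
  rw [twoStage_sum]
  have inner : ∀ A ∈ (univ : Finset (Fin C)).powersetCard S,
      ∑ B ∈ A.powersetCard S₁, (if c ∈ B ∧ (c' ∈ A ∧ c' ∉ B) then (1:ℝ) else 0)
        = (if c ∈ A ∧ c' ∈ A then (1:ℝ) else 0) * ((S-2).choose (S₁-1) : ℕ) := by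
    intro A hA
    by_cases hc : c ∈ A ∧ c' ∈ A
    · rw [if_pos hc, one_mul]
      have hp : ∀ B : Finset (Fin C), (c ∈ B ∧ (c' ∈ A ∧ c' ∉ B)) = (c ∈ B ∧ c' ∉ B) :=
        fun B => by simp [hc.2]
      simp only [hp]
      rw [Finset.sum_boole, cg_mixed A c c' hc.1 hc.2 hne S₁ hS₁, cardA hA]
    · rw [if_neg hc, zero_mul]
      rw [Finset.sum_boole]
      norm_cast
      rw [Finset.card_eq_zero]
      refine Finset.filter_eq_empty_iff.mpr fun B hB hcB => ?_
      have hBA := (mem_powersetCard.mp hB).1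
      exact hc ⟨hBA hcB.1, hcB.2.1⟩
  rw [Finset.sum_congr rfl inner, ← Finset.sum_mul, Finset.sum_boole,
    cg_two univ c c' (mem_univ c) (mem_univ c') hne S hS, card_univ, Fintype.card_fin]
  push_cast
  ring

lemma sum_ind_WW (C S S₁ : ℕ) (hC : 2 ≤ C) (hS : 2 ≤ S) (c c' : Fin C) (hne : c ≠ c') :
    ∑ pr ∈ twoStage C S S₁,
        (if (c ∈ pr.1 ∧ c ∉ pr.2) ∧ (c' ∈ pr.1 ∧ c' ∉ pr.2) then (1:ℝ) else 0)
      = ((C-2).choose (S-2) * (S-2).choose S₁ : ℕ) := by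
  rw [twoStage_sum]
  have inner : ∀ A ∈ (univ : Finset (Fin C)).powersetCard S,
      ∑ B ∈ A.powersetCard S₁, (if (c ∈ A ∧ c ∉ B) ∧ (c' ∈ A ∧ c' ∉ B) then (1:ℝ) else 0)
        = (if c ∈ A ∧ c' ∈ A then (1:ℝ) else 0) * ((S-2).choose S₁ : ℕ) := by
    intro A hA
    by_cases hc : c ∈ A ∧ c' ∈ A
    · rw [if_pos hc, one_mul]
      have hp : ∀ B : Finset (Fin C),
          ((c ∈ A ∧ c ∉ B) ∧ (c' ∈ A ∧ c' ∉ B)) = (c ∉ B ∧ c' ∉ B) :=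
        fun B => by simp [hc.1, hc.2]
      simp only [hp]
      rw [Finset.sum_boole, cg_none A c c' hc.1 hc.2 hne S₁, cardA hA]
    · rw [if_neg hc, zero_mul]
      rw [Finset.sum_boole]
      norm_cast
      rw [Finset.card_eq_zero]
      refine Finset.filter_eq_empty_iff.mpr fun B hB hcB => ?_
      exact hc ⟨hcB.1.1, hcB.2.1⟩
  rw [Finset.sum_congr rfl inner, ← Finset.sum_mul, Finset.sum_boole,
    cg_two univ c c' (mem_univ c) (mem_univ c') hne S hS, card_univ, Fintype.card_fin]
  push_cast
  ring


set_option maxHeartbeats 2000000 in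
theorem HT_ATE_exact_variance (C S S₁ : ℕ) (hC : 2 ≤ C) (hS : 1 ≤ S) (hSC : S ≤ C)
    (hS₁ : 1 ≤ S₁) (hS₁S : S₁ ≤ S - 1) (x z : Fin C → ℝ) :
    (∑ pr ∈ twoStage C S S₁,
        (tauBar C S S₁ x z pr -
          (∑ pr' ∈ twoStage C S S₁, tauBar C S S₁ x z pr') /
            ((twoStage C S S₁).card : ℝ)) ^ 2) / ((twoStage C S S₁).card : ℝ)
    = (1 / (C : ℝ)) *
        ((((1 : ℝ) / ((C : ℝ) - 1)) * ∑ c, (x c - (∑ c', x c') / (C : ℝ)) ^ 2) /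
            ((S : ℝ) / C * ((S₁ : ℝ) / S))
          + (((1 : ℝ) / ((C : ℝ) - 1)) * ∑ c, (z c - (∑ c', z c') / (C : ℝ)) ^ 2) /
            ((S : ℝ) / C * (1 - (S₁ : ℝ) / S))
          - ((1 : ℝ) / ((C : ℝ) - 1)) *
              ∑ c, ((x c - z c) - ((∑ c', x c') / (C : ℝ) - (∑ c', z c') / (C : ℝ))) ^ 2) := by
  classical
  have hS2 : 2 ≤ S := by omega
  have hS₁S' : S₁ < S := by omega
  have hCR : (C : ℝ) ≠ 0 := Nat.cast_ne_zero.mpr (by omega)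
  have hC2R : (2 : ℝ) ≤ (C : ℝ) := by exact_mod_cast hC
  have hC1R : (C : ℝ) - 1 ≠ 0 := by linarith
  have hSR : (S : ℝ) ≠ 0 := Nat.cast_ne_zero.mpr (by omega)
  have hS₁R : (S₁ : ℝ) ≠ 0 := Nat.cast_ne_zero.mpr (by omega)
  have hS₁ltS : (S₁ : ℝ) < S := by exact_mod_cast hS₁S'
  have hSS₁R : (S : ℝ) - S₁ ≠ 0 := by linarith
  set N : ℝ := ((C.choose S * S.choose S₁ : ℕ) : ℝ) with hNdef
  have hN : N ≠ 0 := by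
    rw [hNdef]
    exact Nat.cast_ne_zero.mpr
      (Nat.mul_ne_zero (Nat.choose_pos hSC).ne' (Nat.choose_pos hS₁S'.le).ne')
  have hcard : ((twoStage C S S₁).card : ℝ) = N := twoStage_card C S S₁
  have hcard0 : ((twoStage C S S₁).card : ℝ) ≠ 0 := by rw [hcard]; exact hN
  -- moment identities
  have KD : ∀ c : Fin C, ∑ pr ∈ twoStage C S S₁, (if c ∈ pr.2 then (1:ℝ) else 0)
      = N * S₁ / C := by
    intro c
    rw [sum_ind_D C S S₁ hS hS₁ c, eq_div_iff hCR, hNdef]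
    have h := congrArg (Nat.cast : ℕ → ℝ) (nat_r1 C S S₁ (by omega) hS hS₁)
    push_cast at h ⊢
    linear_combination h
  have KW : ∀ c : Fin C, ∑ pr ∈ twoStage C S S₁,
      (if c ∈ pr.1 ∧ c ∉ pr.2 then (1:ℝ) else 0) = N * ((S:ℝ) - S₁) / C := by
    intro c
    rw [sum_ind_W C S S₁ hS c, eq_div_iff hCR, hNdef]
    have h := congrArg (Nat.cast : ℕ → ℝ) (nat_r0 C S S₁ (by omega) hS)
    push_cast [Nat.cast_sub hS₁S'.le] at h ⊢
    linear_combination h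
  have KDD : ∀ c c' : Fin C, c ≠ c' → ∑ pr ∈ twoStage C S S₁,
      (if c ∈ pr.2 ∧ c' ∈ pr.2 then (1:ℝ) else 0)
      = N * S₁ * ((S₁:ℝ) - 1) / ((C:ℝ) * ((C:ℝ) - 1)) := by
    intro c c' hne
    rcases Nat.lt_or_ge S₁ 2 with h2 | h2
    · rw [sum_ind_DD_small C S S₁ h2 c c' hne]
      have h1 : (S₁ : ℝ) = 1 := by exact_mod_cast (by omega : S₁ = 1)
      rw [h1]; ring
    · rw [sum_ind_DD C S S₁ hC hS2 h2 c c' hne, eq_div_iff (mul_ne_zero hCR hC1R), hNdef]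
      have h := congrArg (Nat.cast : ℕ → ℝ) (nat_r11 C S S₁ hC hS2 h2)
      push_cast [Nat.cast_sub (by omega : 1 ≤ C), Nat.cast_sub (by omega : 1 ≤ S₁)] at h ⊢
      linear_combination h
  have KDW : ∀ c c' : Fin C, c ≠ c' → ∑ pr ∈ twoStage C S S₁,
      (if c ∈ pr.2 ∧ (c' ∈ pr.1 ∧ c' ∉ pr.2) then (1:ℝ) else 0)
      = N * S₁ * ((S:ℝ) - S₁) / ((C:ℝ) * ((C:ℝ) - 1)) := by
    intro c c' hne
    rw [sum_ind_DW C S S₁ hC hS2 hS₁ c c' hne, eq_div_iff (mul_ne_zero hCR hC1R), hNdef]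
    have h := congrArg (Nat.cast : ℕ → ℝ) (nat_r10 C S S₁ hC hS2 hS₁)
    push_cast [Nat.cast_sub (by omega : 1 ≤ C), Nat.cast_sub hS₁S'.le] at h ⊢
    linear_combination h
  have KWW : ∀ c c' : Fin C, c ≠ c' → ∑ pr ∈ twoStage C S S₁,
      (if (c ∈ pr.1 ∧ c ∉ pr.2) ∧ (c' ∈ pr.1 ∧ c' ∉ pr.2) then (1:ℝ) else 0)
      = N * ((S:ℝ) - S₁) * ((S:ℝ) - S₁ - 1) / ((C:ℝ) * ((C:ℝ) - 1)) := by
    intro c c' hne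
    rw [sum_ind_WW C S S₁ hC hS2 c c' hne, eq_div_iff (mul_ne_zero hCR hC1R), hNdef]
    have h := congrArg (Nat.cast : ℕ → ℝ) (nat_r00 C S S₁ hC hS2)
    push_cast [Nat.cast_sub (by omega : 1 ≤ C), Nat.cast_sub hS₁S'.le,
      Nat.cast_sub (by omega : 1 ≤ S - S₁)] at h ⊢
    linear_combination h
  -- variance decomposition
  rw [var_form (twoStage C S S₁) (tauBar C S S₁ x z) hcard0, hcard]
  simp only [tauBar]
  set p1 : ℝ := (S:ℝ)/C * ((S₁:ℝ)/S) with hp1def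
  set p0 : ℝ := (S:ℝ)/C * (1 - (S₁:ℝ)/S) with hp0def
  set Sx : ℝ := ∑ c, x c with hSxdef
  set Sz : ℝ := ∑ c, z c with hSzdef
  set Qx : ℝ := ∑ c, (x c)^2 with hQxdef
  set Qz : ℝ := ∑ c, (z c)^2 with hQzdef
  set Qxz : ℝ := ∑ c, x c * z c with hQxzdef
  set A2 : ℝ := N * S₁ * ((S₁:ℝ) - 1) / ((C:ℝ) * ((C:ℝ) - 1)) with hA2def
  set M2 : ℝ := N * S₁ * ((S:ℝ) - S₁) / ((C:ℝ) * ((C:ℝ) - 1)) with hM2def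
  set B2 : ℝ := N * ((S:ℝ) - S₁) * ((S:ℝ) - S₁ - 1) / ((C:ℝ) * ((C:ℝ) - 1)) with hB2def
  have hp1' : p1 = (S₁:ℝ)/C := by rw [hp1def]; field_simp
  have hp0' : p0 = ((S:ℝ) - S₁)/C := by rw [hp0def]; field_simp
  -- first moment
  have hGc : ∀ c : Fin C, ∑ pr ∈ twoStage C S S₁,
      ((if c ∈ pr.2 then (1:ℝ) else 0) * x c / p1
        - (if c ∈ pr.1 ∧ c ∉ pr.2 then (1:ℝ) else 0) * z c / p0)
      = (N * S₁ / C) * x c / p1 - (N * ((S:ℝ) - S₁) / C) * z c / p0 := by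
    intro c
    rw [Finset.sum_sub_distrib, ← Finset.sum_div, ← Finset.sum_mul, KD c,
      ← Finset.sum_div, ← Finset.sum_mul, KW c]
  have hT1 : (∑ pr ∈ twoStage C S S₁, (1 / (C:ℝ)) * ∑ c,
      ((if c ∈ pr.2 then (1:ℝ) else 0) * x c / p1
        - (if c ∈ pr.1 ∧ c ∉ pr.2 then (1:ℝ) else 0) * z c / p0))
      = N * (Sx - Sz) / C := by
    rw [← Finset.mul_sum, Finset.sum_comm, Finset.sum_congr rfl (fun c _ => hGc c),
      Finset.sum_sub_distrib, ← Finset.sum_div, ← Finset.mul_sum,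
      ← Finset.sum_div, ← Finset.mul_sum, hSxdef, hSzdef, hp1', hp0']
    field_simp
  -- second moment, diagonal
  have hptD : ∀ (c : Fin C) (pr : Finset (Fin C) × Finset (Fin C)),
      ((if c ∈ pr.2 then (1:ℝ) else 0) * x c / p1
        - (if c ∈ pr.1 ∧ c ∉ pr.2 then (1:ℝ) else 0) * z c / p0)
      * ((if c ∈ pr.2 then (1:ℝ) else 0) * x c / p1
        - (if c ∈ pr.1 ∧ c ∉ pr.2 then (1:ℝ) else 0) * z c / p0)
      = (if c ∈ pr.2 then (1:ℝ) else 0) * (x c / p1)^2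
        + (if c ∈ pr.1 ∧ c ∉ pr.2 then (1:ℝ) else 0) * (z c / p0)^2 := by
    intro c pr
    by_cases h2 : c ∈ pr.2 <;> by_cases h1 : c ∈ pr.1 <;> simp [h1, h2] <;> ring
  have hKcc : ∀ c : Fin C, ∑ pr ∈ twoStage C S S₁,
      (((if c ∈ pr.2 then (1:ℝ) else 0) * x c / p1
        - (if c ∈ pr.1 ∧ c ∉ pr.2 then (1:ℝ) else 0) * z c / p0)
      * ((if c ∈ pr.2 then (1:ℝ) else 0) * x c / p1
        - (if c ∈ pr.1 ∧ c ∉ pr.2 then (1:ℝ) else 0) * z c / p0))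
      = (N * S₁ / C) * (x c / p1)^2 + (N * ((S:ℝ) - S₁) / C) * (z c / p0)^2 := by
    intro c
    rw [Finset.sum_congr rfl (fun pr _ => hptD c pr), Finset.sum_add_distrib,
      ← Finset.sum_mul, ← Finset.sum_mul, KD c, KW c]
  -- second moment, off-diagonal
  have hptO : ∀ (c c' : Fin C) (pr : Finset (Fin C) × Finset (Fin C)),
      ((if c ∈ pr.2 then (1:ℝ) else 0) * x c / p1
        - (if c ∈ pr.1 ∧ c ∉ pr.2 then (1:ℝ) else 0) * z c / p0)
      * ((if c' ∈ pr.2 then (1:ℝ) else 0) * x c' / p1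
        - (if c' ∈ pr.1 ∧ c' ∉ pr.2 then (1:ℝ) else 0) * z c' / p0)
      = (if c ∈ pr.2 ∧ c' ∈ pr.2 then (1:ℝ) else 0) * ((x c / p1) * (x c' / p1))
        - (if c ∈ pr.2 ∧ (c' ∈ pr.1 ∧ c' ∉ pr.2) then (1:ℝ) else 0) * ((x c / p1) * (z c' / p0))
        - (if c' ∈ pr.2 ∧ (c ∈ pr.1 ∧ c ∉ pr.2) then (1:ℝ) else 0) * ((z c / p0) * (x c' / p1))
        + (if (c ∈ pr.1 ∧ c ∉ pr.2) ∧ (c' ∈ pr.1 ∧ c' ∉ pr.2) then (1:ℝ) else 0)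
            * ((z c / p0) * (z c' / p0)) := by
    intro c c' pr
    by_cases h2 : c ∈ pr.2 <;> by_cases h1 : c ∈ pr.1 <;>
      by_cases g2 : c' ∈ pr.2 <;> by_cases g1 : c' ∈ pr.1 <;> simp [h1, h2, g1, g2] <;> ring
  have hKco : ∀ c c' : Fin C, c ≠ c' → ∑ pr ∈ twoStage C S S₁,
      (((if c ∈ pr.2 then (1:ℝ) else 0) * x c / p1
        - (if c ∈ pr.1 ∧ c ∉ pr.2 then (1:ℝ) else 0) * z c / p0)
      * ((if c' ∈ pr.2 then (1:ℝ) else 0) * x c' / p1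
        - (if c' ∈ pr.1 ∧ c' ∉ pr.2 then (1:ℝ) else 0) * z c' / p0))
      = A2 * ((x c / p1) * (x c' / p1)) - M2 * ((x c / p1) * (z c' / p0))
        - M2 * ((z c / p0) * (x c' / p1)) + B2 * ((z c / p0) * (z c' / p0)) := by
    intro c c' hne
    rw [Finset.sum_congr rfl (fun pr _ => hptO c c' pr), Finset.sum_add_distrib,
      Finset.sum_sub_distrib, Finset.sum_sub_distrib,
      ← Finset.sum_mul, ← Finset.sum_mul, ← Finset.sum_mul, ← Finset.sum_mul,
      KDD c c' hne, KDW c c' hne, KDW c' c hne.symm, KWW c c' hne]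
  -- row sums
  have hRow : ∀ c : Fin C, (∑ c' : Fin C, ∑ pr ∈ twoStage C S S₁,
      (((if c ∈ pr.2 then (1:ℝ) else 0) * x c / p1
        - (if c ∈ pr.1 ∧ c ∉ pr.2 then (1:ℝ) else 0) * z c / p0)
      * ((if c' ∈ pr.2 then (1:ℝ) else 0) * x c' / p1
        - (if c' ∈ pr.1 ∧ c' ∉ pr.2 then (1:ℝ) else 0) * z c' / p0)))
      = (N * S₁ / C) * (x c / p1)^2 + (N * ((S:ℝ) - S₁) / C) * (z c / p0)^2
        + ((A2 * (x c) / p1 / p1 - M2 * (z c) / p0 / p1) * (Sx - x c)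
            + (B2 * (z c) / p0 / p0 - M2 * (x c) / p1 / p0) * (Sz - z c)) := by
    intro c
    rw [← Finset.add_sum_erase _ _ (mem_univ c), hKcc c]
    congr 1
    rw [Finset.sum_congr rfl
      (fun c' hc' => hKco c c' (Finset.ne_of_mem_erase hc').symm)]
    have hlin : ∀ c' ∈ univ.erase c,
        A2 * ((x c / p1) * (x c' / p1)) - M2 * ((x c / p1) * (z c' / p0))
          - M2 * ((z c / p0) * (x c' / p1)) + B2 * ((z c / p0) * (z c' / p0))
        = (A2 * (x c) / p1 / p1 - M2 * (z c) / p0 / p1) * x c'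
            + (B2 * (z c) / p0 / p0 - M2 * (x c) / p1 / p0) * z c' := fun c' _ => by ring
    rw [Finset.sum_congr rfl hlin, Finset.sum_add_distrib, ← Finset.mul_sum, ← Finset.mul_sum,
      sum_erase_eq x c, sum_erase_eq z c, hSxdef, hSzdef]
  -- assemble second moment
  have hBig : (∑ pr ∈ twoStage C S S₁, ∑ c : Fin C, ∑ c' : Fin C,
      (((if c ∈ pr.2 then (1:ℝ) else 0) * x c / p1
        - (if c ∈ pr.1 ∧ c ∉ pr.2 then (1:ℝ) else 0) * z c / p0)
      * ((if c' ∈ pr.2 then (1:ℝ) else 0) * x c' / p1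
        - (if c' ∈ pr.1 ∧ c' ∉ pr.2 then (1:ℝ) else 0) * z c' / p0)))
      = ∑ c : Fin C, ((N * S₁ / C) * (x c / p1)^2 + (N * ((S:ℝ) - S₁) / C) * (z c / p0)^2
        + ((A2 * (x c) / p1 / p1 - M2 * (z c) / p0 / p1) * (Sx - x c)
            + (B2 * (z c) / p0 / p0 - M2 * (x c) / p1 / p0) * (Sz - z c))) := by
    rw [Finset.sum_comm]
    exact Finset.sum_congr rfl fun c _ => (Finset.sum_comm).trans (hRow c)
  have hT2 : (∑ pr ∈ twoStage C S S₁, ((1 / (C:ℝ)) * ∑ c,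
      ((if c ∈ pr.2 then (1:ℝ) else 0) * x c / p1
        - (if c ∈ pr.1 ∧ c ∉ pr.2 then (1:ℝ) else 0) * z c / p0))^2)
      = N/((C:ℝ)*((C:ℝ)-1)) * ((((C:ℝ)-S₁)/S₁) * Qx
          + (((C:ℝ)-((S:ℝ)-S₁))/((S:ℝ)-S₁)) * Qz + 2*Qxz
          + (((S₁:ℝ)-1)/S₁) * Sx^2 - 2*(Sx*Sz)
          + (((S:ℝ)-S₁-1)/((S:ℝ)-S₁)) * Sz^2) := by
    have hsq : ∀ pr ∈ twoStage C S S₁, ((1 / (C:ℝ)) * ∑ c,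
        ((if c ∈ pr.2 then (1:ℝ) else 0) * x c / p1
          - (if c ∈ pr.1 ∧ c ∉ pr.2 then (1:ℝ) else 0) * z c / p0))^2
        = (1/(C:ℝ))^2 * ∑ c : Fin C, ∑ c' : Fin C,
          (((if c ∈ pr.2 then (1:ℝ) else 0) * x c / p1
        - (if c ∈ pr.1 ∧ c ∉ pr.2 then (1:ℝ) else 0) * z c / p0)
      * ((if c' ∈ pr.2 then (1:ℝ) else 0) * x c' / p1
        - (if c' ∈ pr.1 ∧ c' ∉ pr.2 then (1:ℝ) else 0) * z c' / p0)) := by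
      intro pr _
      rw [mul_pow, pow_two (∑ c, ((if c ∈ pr.2 then (1:ℝ) else 0) * x c / p1
        - (if c ∈ pr.1 ∧ c ∉ pr.2 then (1:ℝ) else 0) * z c / p0)), Finset.sum_mul_sum]
    rw [Finset.sum_congr rfl hsq, ← Finset.mul_sum, hBig]
    have hlin2 : ∀ c ∈ (univ : Finset (Fin C)),
        (N * S₁ / C) * (x c / p1)^2 + (N * ((S:ℝ) - S₁) / C) * (z c / p0)^2
          + ((A2 * (x c) / p1 / p1 - M2 * (z c) / p0 / p1) * (Sx - x c)
              + (B2 * (z c) / p0 / p0 - M2 * (x c) / p1 / p0) * (Sz - z c))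
        = ((N * S₁ / C) / p1 / p1 - A2 / p1 / p1) * (x c)^2
            + ((N * ((S:ℝ) - S₁) / C) / p0 / p0 - B2 / p0 / p0) * (z c)^2
            + (2 * M2 / p1 / p0) * (x c * z c)
            + (A2 * Sx / p1 / p1 - M2 * Sz / p1 / p0) * x c
            + (B2 * Sz / p0 / p0 - M2 * Sx / p1 / p0) * z c := fun c _ => by ring
    rw [Finset.sum_congr rfl hlin2, Finset.sum_add_distrib, Finset.sum_add_distrib,
      Finset.sum_add_distrib, Finset.sum_add_distrib,
      ← Finset.mul_sum, ← Finset.mul_sum, ← Finset.mul_sum, ← Finset.mul_sum, ← Finset.mul_sum,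
      hSxdef, hSzdef, hQxdef, hQzdef, hQxzdef, hA2def, hM2def, hB2def, hp1', hp0']
    field_simp
    ring
  rw [hT1, hT2]
  -- expand the right-hand side sums
  have hcardC : ((univ : Finset (Fin C)).card : ℝ) = C := by
    rw [Finset.card_univ, Fintype.card_fin]
  have hRx : ∑ c, (x c - Sx / C)^2 = Qx - 2*(Sx/C)*Sx + C*(Sx/C)^2 := by
    rw [expand_sq univ x (Sx/C), hcardC, hSxdef, hQxdef]
  have hRz : ∑ c, (z c - Sz / C)^2 = Qz - 2*(Sz/C)*Sz + C*(Sz/C)^2 := by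
    rw [expand_sq univ z (Sz/C), hcardC, hSzdef, hQzdef]
  have hRd : ∑ c, ((x c - z c) - (Sx / C - Sz / C))^2
      = (Qx - 2*Qxz + Qz) - 2*(Sx/C - Sz/C)*(Sx - Sz) + C*(Sx/C - Sz/C)^2 := by
    rw [expand_sq univ (fun c => x c - z c) (Sx/C - Sz/C), hcardC]
    have e1 : ∑ c, (x c - z c)^2 = Qx - 2*Qxz + Qz := by
      have : ∀ c ∈ (univ : Finset (Fin C)), (x c - z c)^2
          = (x c)^2 - 2*(x c * z c) + (z c)^2 := fun c _ => by ring
      rw [Finset.sum_congr rfl this, Finset.sum_add_distrib, Finset.sum_sub_distrib,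
        ← Finset.mul_sum, hQxdef, hQzdef, hQxzdef]
    have e2 : ∑ c, (x c - z c) = Sx - Sz := by
      rw [Finset.sum_sub_distrib, hSxdef, hSzdef]
    rw [e1, e2]
  rw [hRx, hRz, hRd, hp1', hp0']
  field_simp
  ring
end
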